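/- arXiv:2604.09727 — 6 statements merged into one kernel-verified Lean document; each statement's English description precedes it below -/
import Mathlib

section
/- Let q be a rational number with q ≠ 1 and [n]_q = (1 - q^n)/(1 - q), and let [n]_q! = ∏_{k=1}^n [k]_q with [0]_q! = 1. Fix N ≥ 1 with [k]_q ≠ 0 for all k ≥ 1. Define the q-hypergeometric Bernoulli numbers B_{N,n} by B_{N,0} = 1 and the recurrence ∑_{k=0}^n (B_{N,k}/k!) * ([N]_q!/[N+n-k]_q!) = 0 for n ≥ 1. Then for n ≥ 1, B_{N,n} = (-1)^n * n! * det M, where M is the n×n lower Hessenberg Toeplitz matrix with entries M[i][j] = [N]_q!/[N+i-j+1]_q! for i ≥ j, M[i][i+1] = 1, and M[i][j] = 0 for j > i+1 (indices 1 ≤ i, j ≤ n). -/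
open Finset

/-- The `q`-integer `[n]_q = 1 + q + ⋯ + q^{n-1}`. -/
def qint (q : ℚ) (n : ℕ) : ℚ := ∑ i ∈ Finset.range n, q ^ i

/-- The `q`-factorial `[n]_q! = [1]_q [2]_q ⋯ [n]_q`. -/
def qfact (q : ℚ) (n : ℕ) : ℚ := ∏ k ∈ Finset.Icc 1 n, qint q k

def qBa (q : ℚ) (N m : ℕ) : ℚ := qfact q N / qfact q (N + m + 1)

def qBM (q : ℚ) (N n : ℕ) : Matrix (Fin n) (Fin n) ℚ :=
  Matrix.of fun i j : Fin n =>
    if (j : ℕ) = (i : ℕ) + 1 then 1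
    else if (j : ℕ) ≤ (i : ℕ) then qfact q N / qfact q (N + ((i : ℕ) - (j : ℕ)) + 1)
    else 0

lemma qBM_val (q : ℚ) (N n : ℕ) (i j : Fin n) :
    qBM q N n i j = if (j : ℕ) = (i : ℕ) + 1 then 1
      else if (j : ℕ) ≤ (i : ℕ) then qBa q N ((i : ℕ) - (j : ℕ)) else 0 := rfl

lemma succAbove_val {n : ℕ} (i : Fin (n+1)) (x : Fin n) :
    ((i.succAbove x : Fin (n+1)) : ℕ) = if (x : ℕ) < (i : ℕ) then (x : ℕ) else (x : ℕ) + 1 := by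
  rcases lt_or_ge ((x : ℕ)) ((i : ℕ)) with h | h
  · rw [Fin.succAbove_of_castSucc_lt _ _ (by simpa [Fin.lt_def] using h), if_pos h]; rfl
  · rw [Fin.succAbove_of_le_castSucc _ _ (by simpa [Fin.le_def] using h), if_neg (not_lt.mpr h)]; rfl

lemma qBM_minor (q : ℚ) (N n : ℕ) (i : Fin (n+1)) :
    ((qBM q N (n+1)).submatrix i.succAbove Fin.succ).det = (qBM q N (n - (i : ℕ))).det := by
  have hk : (i : ℕ) ≤ n := Nat.lt_succ_iff.mp i.isLt
  set k := (i : ℕ) with hkdef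
  let e : Fin k ⊕ Fin (n - k) ≃ Fin n := finSumFinEquiv.trans (finCongr (by omega))
  rw [← Matrix.det_submatrix_equiv_self e]
  have he1 : ∀ r : Fin k, ((e (Sum.inl r)) : ℕ) = (r : ℕ) := fun r => rfl
  have he2 : ∀ s : Fin (n - k), ((e (Sum.inr s)) : ℕ) = k + (s : ℕ) := fun s => rfl
  have hM : (((qBM q N (n+1)).submatrix i.succAbove Fin.succ).submatrix e e)
      = Matrix.fromBlocks
          (Matrix.of fun r c : Fin k =>
            if (c : ℕ) = (r : ℕ) then 1
            else if (c : ℕ) < (r : ℕ) then qBa q N ((r : ℕ) - (c : ℕ) - 1) else 0)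
          0
          (Matrix.of fun (r : Fin (n - k)) (c : Fin k) => qBa q N (k + (r : ℕ) - (c : ℕ)))
          (qBM q N (n - k)) := by
    ext r c
    cases r with
    | inl r =>
      have hrow : ((i.succAbove (e (Sum.inl r))) : ℕ) = (r : ℕ) := by
        rw [succAbove_val, he1, if_pos r.isLt]
      cases c with
      | inl c =>
        have hcol : (((e (Sum.inl c)).succ : Fin (n+1)) : ℕ) = (c : ℕ) + 1 := by
          rw [Fin.val_succ, he1]
        simp only [Matrix.submatrix_apply, qBM_val, hrow, hcol, Matrix.fromBlocks_apply₁₁,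
          Matrix.of_apply]
        split_ifs <;> first | rfl | omega | (congr 1; omega)
      | inr c =>
        have hcol : (((e (Sum.inr c)).succ : Fin (n+1)) : ℕ) = k + (c : ℕ) + 1 := by
          rw [Fin.val_succ, he2]
        have hr := r.isLt
        simp only [Matrix.submatrix_apply, qBM_val, hrow, hcol, Matrix.fromBlocks_apply₁₂,
          Matrix.zero_apply]
        rw [if_neg (by omega), if_neg (by omega)]
    | inr r =>
      have hrow : ((i.succAbove (e (Sum.inr r))) : ℕ) = k + (r : ℕ) + 1 := by
        rw [succAbove_val, he2, if_neg (by omega)]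
      cases c with
      | inl c =>
        have hcol : (((e (Sum.inl c)).succ : Fin (n+1)) : ℕ) = (c : ℕ) + 1 := by
          rw [Fin.val_succ, he1]
        have hc := c.isLt
        simp only [Matrix.submatrix_apply, qBM_val, hrow, hcol, Matrix.fromBlocks_apply₂₁,
          Matrix.of_apply]
        rw [if_neg (by omega), if_pos (by omega)]
        congr 1; omega
      | inr c =>
        have hcol : (((e (Sum.inr c)).succ : Fin (n+1)) : ℕ) = k + (c : ℕ) + 1 := by
          rw [Fin.val_succ, he2]
        simp only [Matrix.submatrix_apply, qBM_val, hrow, hcol, Matrix.fromBlocks_apply₂₂]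
        split_ifs <;> first | rfl | omega | (congr 1; omega)
  rw [hM, Matrix.det_fromBlocks_zero₁₂]
  have hL : (Matrix.of fun r c : Fin k =>
      if (c : ℕ) = (r : ℕ) then 1
      else if (c : ℕ) < (r : ℕ) then qBa q N ((r : ℕ) - (c : ℕ) - 1) else 0 :
      Matrix (Fin k) (Fin k) ℚ).det = 1 := by
    rw [Matrix.det_of_lowerTriangular]
    · simp
    · intro a b hab
      have : (a : ℕ) < (b : ℕ) := hab
      simp only [Matrix.of_apply]
      rw [if_neg (by omega), if_neg (by omega)]
  rw [hL, one_mul]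

lemma qBM_rec (q : ℚ) (N n : ℕ) :
    (qBM q N (n+1)).det
      = ∑ i ∈ range (n+1), (-1 : ℚ) ^ i * qBa q N i * (qBM q N (n - i)).det := by
  rw [show (n+1) = (n).succ from rfl, Matrix.det_succ_column_zero]
  rw [← Fin.sum_univ_eq_sum_range (fun i => (-1 : ℚ) ^ i * qBa q N i * (qBM q N (n - i)).det)]
  apply Finset.sum_congr rfl
  intro i _
  rw [qBM_minor]
  congr 1

theorem qBernoulli_det (q : ℚ) (hq1 : q ≠ 1) (hq : ∀ k : ℕ, 1 ≤ k → qint q k ≠ 0)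
    (N : ℕ) (hN : 1 ≤ N) (B : ℕ → ℚ) (hB0 : B 0 = 1)
    (hB : ∀ n : ℕ, 1 ≤ n →
      ∑ k ∈ Finset.range (n + 1),
        (B k / k.factorial) * (qfact q N / qfact q (N + n - k)) = 0) :
    ∀ n : ℕ, 1 ≤ n →
      B n = (-1 : ℚ) ^ n * n.factorial *
        Matrix.det (Matrix.of fun i j : Fin n =>
          if (j : ℕ) = (i : ℕ) + 1 then 1
          else if (j : ℕ) ≤ (i : ℕ) then qfact q N / qfact q (N + ((i : ℕ) - (j : ℕ)) + 1)
          else 0) := by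
  have hfact : ∀ m : ℕ, qfact q m ≠ 0 := by
    intro m
    exact Finset.prod_ne_zero_iff.mpr fun k hk => hq k (Finset.mem_Icc.mp hk).1
  have main : ∀ n : ℕ, B n = (-1 : ℚ) ^ n * n.factorial * (qBM q N n).det := by
    intro n
    induction n using Nat.strong_induction_on with
    | _ n ih =>
      match n with
      | 0 => simp [hB0, qBM]
      | m + 1 =>
        have key := hB (m+1) (by omega)
        rw [Finset.sum_range_succ] at key
        have hlast : N + (m + 1) - (m + 1) = N := by omega
        rw [hlast, div_self (hfact N), mul_one] at key
        have hfm : ((m+1).factorial : ℚ) ≠ 0 := by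
          exact_mod_cast Nat.factorial_ne_zero (m+1)
        have hS : ∑ k ∈ range (m + 1), B k / k.factorial * (qfact q N / qfact q (N + (m+1) - k))
            = (-1 : ℚ) ^ m * (qBM q N (m+1)).det := by
          have h1 : ∀ k ∈ range (m+1),
              B k / k.factorial * (qfact q N / qfact q (N + (m+1) - k))
                = (-1 : ℚ) ^ k * (qBM q N k).det * qBa q N (m - k) := by
            intro k hk
            have hkm : k ≤ m := by simpa [Nat.lt_succ_iff] using hk
            have hfk : ((k.factorial : ℚ)) ≠ 0 := by
              exact_mod_cast Nat.factorial_ne_zero k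
            rw [ih k (by omega)]
            have harg : N + (m+1) - k = N + (m - k) + 1 := by omega
            rw [harg]
            show (-1:ℚ)^k * k.factorial * (qBM q N k).det / k.factorial * qBa q N (m-k) = _
            field_simp
          rw [Finset.sum_congr rfl h1, ← Finset.sum_range_reflect]
          have h2 : ∀ j ∈ range (m+1),
              (-1 : ℚ) ^ (m + 1 - 1 - j) * (qBM q N (m + 1 - 1 - j)).det
                  * qBa q N (m - (m + 1 - 1 - j))
                = (-1 : ℚ) ^ m * ((-1 : ℚ) ^ j * qBa q N j * (qBM q N (m - j)).det) := by
            intro j hj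
            have hjm : j ≤ m := by simpa [Nat.lt_succ_iff] using hj
            have e1 : m + 1 - 1 - j = m - j := by omega
            have e2 : m - (m - j) = j := by omega
            rw [e1, e2]
            have e3 : (-1 : ℚ) ^ (m - j) = (-1 : ℚ) ^ m * (-1 : ℚ) ^ j := by
              obtain ⟨d, rfl⟩ : ∃ d, m = j + d := ⟨m - j, by omega⟩
              rw [show j + d - j = d by omega, ← pow_add,
                show j + d + j = 2 * j + d by ring, pow_add, pow_mul]
              norm_num
            rw [e3]; ring
          rw [Finset.sum_congr rfl h2, ← Finset.mul_sum, ← qBM_rec]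
        rw [hS] at key
        have : B (m+1) / (m+1).factorial = -((-1:ℚ)^m * (qBM q N (m+1)).det) := by
          linarith
        have hBm : B (m+1) = (-1:ℚ)^(m+1) * (m+1).factorial * (qBM q N (m+1)).det := by
          rw [div_eq_iff hfm] at this
          rw [this, pow_succ]
          ring
        exact hBm
  intro n hn
  exact main n
end

section
/- Let q ∈ ℚ with [k]_q ≠ 0 for all k ≥ 1, and fix N ≥ 1. Define P n = [N+n]_q!/[N]_q! (a constant polynomial in ℚ[x]) and Q n (x) = [N+n]_q! * ∑_{k=0}^n x^k/[N+k]_q!. Then for n ≥ 2: P n = ([N+n]_q + x) * P (n-1) - [N+n-1]_q * x * P (n-2) and Q n = ([N+n]_q + x) * Q (n-1) - [N+n-1]_q * x * Q (n-2), with P 0 = Q 0 = 1, P 1 = [N+1]_q, Q 1 = [N+1]_q + x. -/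
open Finset Polynomial

/-! Both convergents satisfy a first-order recurrence `u (n+1) = a (n+1) u n + c x^(n+1)`
(with `c = 0` for `P`, `c = 1` for `Q`). Eliminating the inhomogeneous term between two
consecutive steps, via `x^(n+2) = x · x^(n+1)`, gives the three-term recurrence. -/

theorem succ_succ_eq_of_succ_eq_mul_add_mul_pow {R : Type*} [CommRing R]
    (u a : ℕ → R) (c x : R) (h : ∀ n, u (n + 1) = a (n + 1) * u n + c * x ^ (n + 1))
    (n : ℕ) :
    u (n + 2) = (a (n + 2) + x) * u (n + 1) - a (n + 1) * x * u n := by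
  linear_combination h (n + 1) - x * h n

theorem qfact_succ (q : ℚ) (n : ℕ) : qfact q (n + 1) = qfact q n * qint q (n + 1) :=
  Finset.prod_Icc_succ_top (Nat.le_add_left 1 n) _

theorem qfact_ne_zero {q : ℚ} (hq : ∀ k : ℕ, 1 ≤ k → qint q k ≠ 0) (n : ℕ) :
    qfact q n ≠ 0 :=
  Finset.prod_ne_zero_iff.mpr fun k hk => hq k (Finset.mem_Icc.mp hk).1

theorem three_term_qint_recurrence_of_succ (q : ℚ) (N : ℕ) (u : ℕ → ℚ[X]) (c : ℚ[X])
    (h : ∀ n, u (n + 1) = C (qint q (N + (n + 1))) * u n + c * X ^ (n + 1)) :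
    ∀ n : ℕ, 2 ≤ n →
      u n = (C (qint q (N + n)) + X) * u (n - 1) - C (qint q (N + n - 1)) * X * u (n - 2) := by
  intro n hn
  obtain ⟨m, rfl⟩ := Nat.exists_eq_add_of_le' hn
  simpa only [show m + 2 - 1 = m + 1 by omega, Nat.add_sub_cancel,
      show N + (m + 2) - 1 = N + (m + 1) by omega]
    using succ_succ_eq_of_succ_eq_mul_add_mul_pow u (fun k => C (qint q (N + k))) c X h m

theorem qfact_add_succ_div (q : ℚ) (N n : ℕ) :
    qfact q (N + (n + 1)) / qfact q N = qint q (N + (n + 1)) * (qfact q (N + n) / qfact q N) := by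
  rw [← add_assoc, qfact_succ]
  ring

theorem qfact_mul_partial_sum_succ {q : ℚ} (hq : ∀ k : ℕ, 1 ≤ k → qint q k ≠ 0)
    (N n : ℕ) :
    C (qfact q (N + (n + 1))) *
        ∑ k ∈ range (n + 2), C (1 / qfact q (N + k)) * (X : ℚ[X]) ^ k =
      C (qint q (N + (n + 1))) *
          (C (qfact q (N + n)) * ∑ k ∈ range (n + 1), C (1 / qfact q (N + k)) * X ^ k) +
        X ^ (n + 1) := by
  have hF : C (qfact q (N + (n + 1))) * C (1 / qfact q (N + (n + 1))) = 1 := by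
    rw [← C_mul, mul_one_div_cancel (qfact_ne_zero hq _), C_1]
  rw [sum_range_succ _ (n + 1), mul_add, ← mul_assoc, hF, one_mul, ← mul_assoc, ← C_mul,
    ← add_assoc, qfact_succ, mul_comm (qfact q (N + n))]

theorem qBernoulli_convergent_recurrences_general (q : ℚ)
    (hq : ∀ k : ℕ, 1 ≤ k → qint q k ≠ 0) (N : ℕ)
    (P Q : ℕ → Polynomial ℚ)
    (hP : ∀ n : ℕ, P n = Polynomial.C (qfact q (N + n) / qfact q N))
    (hQ : ∀ n : ℕ, Q n = Polynomial.C (qfact q (N + n)) *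
      ∑ k ∈ Finset.range (n + 1), Polynomial.C (1 / qfact q (N + k)) * Polynomial.X ^ k) :
    (∀ n : ℕ, 2 ≤ n →
      P n = (Polynomial.C (qint q (N + n)) + Polynomial.X) * P (n - 1)
        - Polynomial.C (qint q (N + n - 1)) * Polynomial.X * P (n - 2)) ∧
    (∀ n : ℕ, 2 ≤ n →
      Q n = (Polynomial.C (qint q (N + n)) + Polynomial.X) * Q (n - 1)
        - Polynomial.C (qint q (N + n - 1)) * Polynomial.X * Q (n - 2)) ∧
    P 0 = 1 ∧ Q 0 = 1 ∧ P 1 = Polynomial.C (qint q (N + 1)) ∧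
    Q 1 = Polynomial.C (qint q (N + 1)) + Polynomial.X := by
  have hP_succ : ∀ n, P (n + 1) = C (qint q (N + (n + 1))) * P n + 0 * X ^ (n + 1) := by
    intro n
    rw [hP, hP, qfact_add_succ_div, C_mul, zero_mul, add_zero]
  have hQ_succ : ∀ n, Q (n + 1) = C (qint q (N + (n + 1))) * Q n + 1 * X ^ (n + 1) := by
    intro n
    rw [hQ, hQ, one_mul, qfact_mul_partial_sum_succ hq]
  have hP0 : P 0 = 1 := by rw [hP, add_zero, div_self (qfact_ne_zero hq N), C_1]
  have hQ0 : Q 0 = 1 := by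
    rw [hQ, sum_range_one, add_zero, pow_zero, mul_one, ← C_mul,
      mul_one_div_cancel (qfact_ne_zero hq N), C_1]
  refine ⟨three_term_qint_recurrence_of_succ q N P 0 hP_succ,
    three_term_qint_recurrence_of_succ q N Q 1 hQ_succ, hP0, hQ0, ?_, ?_⟩
  · simpa [hP0] using hP_succ 0
  · simpa [hQ0] using hQ_succ 0

theorem qBernoulli_convergent_recurrences (q : ℚ)
    (hq : ∀ k : ℕ, 1 ≤ k → qint q k ≠ 0) (N : ℕ) (hN : 1 ≤ N)
    (P Q : ℕ → Polynomial ℚ)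
    (hP : ∀ n : ℕ, P n = Polynomial.C (qfact q (N + n) / qfact q N))
    (hQ : ∀ n : ℕ, Q n = Polynomial.C (qfact q (N + n)) *
      ∑ k ∈ Finset.range (n + 1), Polynomial.C (1 / qfact q (N + k)) * Polynomial.X ^ k) :
    (∀ n : ℕ, 2 ≤ n →
      P n = (Polynomial.C (qint q (N + n)) + Polynomial.X) * P (n - 1)
        - Polynomial.C (qint q (N + n - 1)) * Polynomial.X * P (n - 2)) ∧
    (∀ n : ℕ, 2 ≤ n →
      Q n = (Polynomial.C (qint q (N + n)) + Polynomial.X) * Q (n - 1)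
        - Polynomial.C (qint q (N + n - 1)) * Polynomial.X * Q (n - 2)) ∧
    P 0 = 1 ∧ Q 0 = 1 ∧ P 1 = Polynomial.C (qint q (N + 1)) ∧
    Q 1 = Polynomial.C (qint q (N + 1)) + Polynomial.X :=
  qBernoulli_convergent_recurrences_general q hq N P Q hP hQ
end

section
/- Let q ∈ ℚ with [k]_q ≠ 0 for all k ≥ 1 and N ≥ 1. Define the q-hypergeometric Cauchy numbers C_{N,n} so that ∑_{n≥0} (C_{N,n}/n!) X^n is the inverse of ∑_{j≥0} (-1)^j ([N]_q/[N+j]_q) X^j in ℚ[[X]]. Then for n ≥ 1, C_{N,n} = n! * det M, where M is the n×n Toeplitz–Hessenberg matrix with M[i][j] = [N]_q/[N+i-j+1]_q for i ≥ j, M[i][i+1] = 1, M[i][j] = 0 for j > i+1. -/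
open Finset PowerSeries

/-- The Toeplitz-Hessenberg matrix with `c (i-j+1)` below/on the diagonal and 1 above. -/
def hess (c : ℕ → ℚ) (n : ℕ) : Matrix (Fin n) (Fin n) ℚ :=
  Matrix.of fun i j =>
    if (j : ℕ) = (i : ℕ) + 1 then 1
    else if (j : ℕ) ≤ (i : ℕ) then c ((i : ℕ) - (j : ℕ) + 1) else 0

lemma hess_minor (c : ℕ → ℚ) (n : ℕ) (j : Fin (n + 1)) :
    ((hess c (n + 1)).submatrix (Fin.last n).succAbove j.succAbove).det
      = (hess c j).det := by
  set m : ℕ := (j : ℕ) with hm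
  have hmn : m ≤ n := Nat.lt_succ_iff.mp j.isLt
  have hsplit : m + (n - m) = n := by omega
  set E : Fin m ⊕ Fin (n - m) ≃ Fin n := finSumFinEquiv.trans (finCongr hsplit) with hE
  rw [← Matrix.det_submatrix_equiv_self E]
  have key : ((hess c (n + 1)).submatrix (Fin.last n).succAbove j.succAbove).submatrix E E
      = Matrix.fromBlocks (hess c m) 0
          (Matrix.of fun (b : Fin (n - m)) (a : Fin m) =>
            ((hess c (n + 1)).submatrix (Fin.last n).succAbove j.succAbove)
              (E (Sum.inr b)) (E (Sum.inl a)))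
          (Matrix.of fun (b b' : Fin (n - m)) =>
            ((hess c (n + 1)).submatrix (Fin.last n).succAbove j.succAbove)
              (E (Sum.inr b)) (E (Sum.inr b'))) := by
    ext r s
    cases r with
    | inl a =>
      cases s with
      | inl a' =>
        have hEa : ((E (Sum.inl a)) : ℕ) = (a : ℕ) := by simp [hE]
        have hEa' : ((E (Sum.inl a')) : ℕ) = (a' : ℕ) := by simp [hE]
        have ha : ((a : ℕ) : ℕ) < m := a.isLt
        have ha' : ((a' : ℕ) : ℕ) < m := a'.isLt
        simp only [Matrix.submatrix_apply, Matrix.fromBlocks_apply₁₁]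
        rw [Fin.succAbove_last]
        have hrow : (((Fin.castSucc (E (Sum.inl a))) : Fin (n+1)) : ℕ) = (a : ℕ) := by
          simp [hEa]
        have hcol : ((j.succAbove (E (Sum.inl a'))) : ℕ) = (a' : ℕ) := by
          rw [Fin.succAbove_of_castSucc_lt]
          · simp [hEa']
          · rw [Fin.lt_iff_val_lt_val]; simp only [Fin.coe_castSucc, hEa']; exact ha'
        simp only [hess, Matrix.of_apply, hrow, hcol]
      | inr b' =>
        have hEa : ((E (Sum.inl a)) : ℕ) = (a : ℕ) := by simp [hE]
        have hEb' : ((E (Sum.inr b')) : ℕ) = m + (b' : ℕ) := by simp [hE]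
        simp only [Matrix.submatrix_apply, Matrix.fromBlocks_apply₁₂, Matrix.zero_apply]
        rw [Fin.succAbove_last]
        have hrow : (((Fin.castSucc (E (Sum.inl a))) : Fin (n+1)) : ℕ) = (a : ℕ) := by
          simp [hEa]
        have hcol : ((j.succAbove (E (Sum.inr b'))) : ℕ) = m + (b' : ℕ) + 1 := by
          rw [Fin.succAbove_of_le_castSucc]
          · simp [hEb']
          · rw [Fin.le_iff_val_le_val, Fin.coe_castSucc, hEb']; omega
        have ha : (a : ℕ) < m := a.isLt
        simp only [hess, Matrix.of_apply, hrow, hcol]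
        rw [if_neg (by omega), if_neg (by omega)]
    | inr b =>
      cases s with
      | inl a' => simp [Matrix.fromBlocks_apply₂₁]
      | inr b' => simp [Matrix.fromBlocks_apply₂₂]
  rw [key, Matrix.det_fromBlocks_zero₁₂]
  have hD : (Matrix.of fun (b b' : Fin (n - m)) =>
      ((hess c (n + 1)).submatrix (Fin.last n).succAbove j.succAbove)
        (E (Sum.inr b)) (E (Sum.inr b'))).det = 1 := by
    have entry : ∀ b b' : Fin (n - m),
        ((hess c (n + 1)).submatrix (Fin.last n).succAbove j.succAbove)
          (E (Sum.inr b)) (E (Sum.inr b'))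
        = if (b' : ℕ) = (b : ℕ) then 1
          else if (b' : ℕ) < (b : ℕ) then c ((b : ℕ) - (b' : ℕ)) else 0 := by
      intro b b'
      have hEb : ((E (Sum.inr b)) : ℕ) = m + (b : ℕ) := by simp [hE]
      have hEb' : ((E (Sum.inr b')) : ℕ) = m + (b' : ℕ) := by simp [hE]
      simp only [Matrix.submatrix_apply]
      rw [Fin.succAbove_last]
      have hrow : (((Fin.castSucc (E (Sum.inr b))) : Fin (n+1)) : ℕ) = m + (b : ℕ) := by
        simp [hEb]
      have hcol : ((j.succAbove (E (Sum.inr b'))) : ℕ) = m + (b' : ℕ) + 1 := by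
        rw [Fin.succAbove_of_le_castSucc]
        · simp [hEb']
        · rw [Fin.le_iff_val_le_val, Fin.coe_castSucc, hEb']; omega
      simp only [hess, Matrix.of_apply, hrow, hcol]
      by_cases h1 : (b' : ℕ) = (b : ℕ)
      · rw [if_pos (by omega), if_pos h1]
      · rw [if_neg (by omega), if_neg h1]
        by_cases h2 : (b' : ℕ) < (b : ℕ)
        · rw [if_pos (by omega), if_pos h2]
          congr 1
          omega
        · rw [if_neg (by omega), if_neg h2]
    rw [Matrix.det_of_lowerTriangular]
    · rw [Finset.prod_congr rfl fun b _ => ?_, Finset.prod_const_one]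
      rw [Matrix.of_apply, entry, if_pos rfl]
    · intro b b' hbb'
      rw [Matrix.of_apply, entry]
      have : (b : ℕ) < (b' : ℕ) := hbb'
      rw [if_neg (by omega), if_neg (by omega)]
  rw [hD, mul_one]

lemma hess_rec (c : ℕ → ℚ) (n : ℕ) :
    (hess c (n + 1)).det
      = ∑ j : Fin (n + 1), (-1 : ℚ) ^ (n + (j : ℕ)) * c (n + 1 - (j : ℕ)) * (hess c (j : ℕ)).det := by
  rw [Matrix.det_succ_row (hess c (n + 1)) (Fin.last n)]
  refine Finset.sum_congr rfl fun j _ => ?_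
  rw [hess_minor]
  have hjn : (j : ℕ) ≤ n := Nat.lt_succ_iff.mp j.isLt
  have hentry : hess c (n + 1) (Fin.last n) j = c (n + 1 - (j : ℕ)) := by
    simp only [hess, Matrix.of_apply, Fin.val_last]
    rw [if_neg (by omega), if_pos hjn]
    congr 1
    omega
  rw [hentry, Fin.val_last]

lemma hess_series (c : ℕ → ℚ) (hc0 : c 0 = 1) :
    (PowerSeries.mk fun k => (-1 : ℚ) ^ k * c k) * (PowerSeries.mk fun n => (hess c n).det) = 1 := by
  ext n
  rw [PowerSeries.coeff_mul]
  simp only [PowerSeries.coeff_mk]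
  rw [Finset.Nat.sum_antidiagonal_eq_sum_range_succ_mk]
  cases n with
  | zero =>
    simp [hc0, Matrix.det_fin_zero]
  | succ n =>
    rw [Finset.sum_range_succ']
    simp only [pow_zero, one_mul, Nat.sub_zero, hc0]
    have h1 : ∑ i ∈ Finset.range (n + 1), (-1 : ℚ) ^ (i + 1) * c (i + 1) * (hess c (n + 1 - (i + 1))).det
        = -(hess c (n + 1)).det := by
      rw [hess_rec c n,
        Fin.sum_univ_eq_sum_range (fun j => (-1 : ℚ) ^ (n + j) * c (n + 1 - j) * (hess c j).det) (n + 1),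
        ← Finset.sum_range_reflect (fun j => (-1 : ℚ) ^ (n + j) * c (n + 1 - j) * (hess c j).det) (n + 1),
        ← Finset.sum_neg_distrib]
      refine Finset.sum_congr rfl fun i hi => ?_
      have hin : i ≤ n := Nat.lt_succ_iff.mp (Finset.mem_range.mp hi)
      have e1 : n + 1 - 1 - i = n - i := by omega
      have e2 : n + 1 - (n - i) = i + 1 := by omega
      have e3 : n + 1 - (i + 1) = n - i := by omega
      rw [e1, e2, e3]
      have hsign : (-1 : ℚ) ^ (n + (n - i)) = (-1 : ℚ) ^ i := by
        have : n + (n - i) = 2 * (n - i) + i := by omega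
        rw [this, pow_add, pow_mul, neg_one_sq, one_pow, one_mul]
      rw [hsign]
      ring
    rw [h1]
    simp [PowerSeries.coeff_one]

theorem qCauchy_det (q : ℚ) (hq : ∀ k : ℕ, 1 ≤ k → qint q k ≠ 0)
    (N : ℕ) (hN : 1 ≤ N) (C : ℕ → ℚ)
    (hC : (PowerSeries.mk fun j => (-1 : ℚ) ^ j * (qint q N / qint q (N + j))) *
        (PowerSeries.mk fun n => C n / n.factorial) = 1) :
    ∀ n : ℕ, 1 ≤ n →
      C n = n.factorial *
        Matrix.det (Matrix.of fun i j : Fin n =>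
          if (j : ℕ) = (i : ℕ) + 1 then 1
          else if (j : ℕ) ≤ (i : ℕ) then qint q N / qint q (N + ((i : ℕ) - (j : ℕ)) + 1)
          else 0) := by
  intro n hn
  set c : ℕ → ℚ := fun k => qint q N / qint q (N + k) with hc
  have hc0 : c 0 = 1 := by
    simp only [hc, Nat.add_zero]
    exact div_self (hq N hN)
  have hseries := hess_series c hc0
  -- uniqueness of inverse
  have huniq : (PowerSeries.mk fun n => C n / n.factorial)
      = (PowerSeries.mk fun n => (hess c n).det) := by
    calc (PowerSeries.mk fun n => C n / n.factorial)
        = (PowerSeries.mk fun n => C n / n.factorial)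
          * ((PowerSeries.mk fun k => (-1 : ℚ) ^ k * c k)
            * (PowerSeries.mk fun n => (hess c n).det)) := by rw [hseries, mul_one]
      _ = ((PowerSeries.mk fun j => (-1 : ℚ) ^ j * (qint q N / qint q (N + j)))
          * (PowerSeries.mk fun n => C n / n.factorial))
          * (PowerSeries.mk fun n => (hess c n).det) := by ring
      _ = (PowerSeries.mk fun n => (hess c n).det) := by rw [hC, one_mul]
  have hcoef := congrArg (PowerSeries.coeff n) huniq
  simp only [PowerSeries.coeff_mk] at hcoef
  have hmat : (Matrix.of fun i j : Fin n =>
      if (j : ℕ) = (i : ℕ) + 1 then 1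
      else if (j : ℕ) ≤ (i : ℕ) then qint q N / qint q (N + ((i : ℕ) - (j : ℕ)) + 1)
      else 0) = hess c n := by
    ext i j
    simp only [hess, Matrix.of_apply, hc, Nat.add_assoc]
  rw [hmat, ← hcoef]
  have hfac : (n.factorial : ℚ) ≠ 0 := Nat.cast_ne_zero.mpr (Nat.factorial_ne_zero n)
  field_simp
end

section
/- Let q ∈ ℚ with [k]_q ≠ 0 for all k ≥ 1 and N ≥ 0. Define the q-hypergeometric Euler numbers E_{N,2n} by requiring (∑_{j≥0} ([2N]_q!/[2N+2j]_q!) X^j) * (∑_{n≥0} (E_{N,2n}/(2n)!) X^n) = 1 in ℚ[[X]]. Then for n ≥ 1, E_{N,2n} = (-1)^n * (2n)! * det M, where M is the n×n Toeplitz–Hessenberg matrix with M[i][j] = [2N]_q!/[2N+2(i-j+1)]_q! for i ≥ j, M[i][i+1] = 1, and M[i][j] = 0 for j > i+1. -/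
open Finset PowerSeries

def hmat (a : ℕ → ℚ) (n : ℕ) : Matrix (Fin n) (Fin n) ℚ :=
  Matrix.of fun i j => if (j:ℕ) = (i:ℕ) + 1 then 1
    else if (j:ℕ) ≤ (i:ℕ) then a ((i:ℕ) - (j:ℕ) + 1) else 0


lemma hmat_minor (a : ℕ → ℚ) (n : ℕ) (i : Fin (n+1)) :
    ((hmat a (n+1)).submatrix i.succAbove Fin.succ).det = (hmat a (n - (i:ℕ))).det := by
  set k := (i : ℕ) with hk
  have hkn : k ≤ n := Nat.lt_succ_iff.mp i.isLt
  have hadd : k + (n - k) = n := Nat.add_sub_cancel' hkn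
  let e : Fin k ⊕ Fin (n - k) ≃ Fin n := finSumFinEquiv.trans (finCongr hadd)
  rw [← Matrix.det_submatrix_equiv_self e]
  have hsa : ∀ j : Fin n, (i.succAbove j : ℕ) = if (j:ℕ) < k then (j:ℕ) else (j:ℕ) + 1 := by
    intro j
    by_cases h : (j:ℕ) < k
    · rw [Fin.succAbove_of_castSucc_lt _ _ (by simpa [Fin.lt_def] using h)]
      simp [h]
    · rw [Fin.succAbove_of_le_castSucc _ _ (by simpa [Fin.le_def] using Nat.le_of_not_lt h)]
      simp [h]
  have heq : ((hmat a (n+1)).submatrix i.succAbove Fin.succ).submatrix e e =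
      Matrix.fromBlocks
        (Matrix.of fun r c : Fin k => if (c:ℕ) = (r:ℕ) then 1
          else if (c:ℕ) < (r:ℕ) then a ((r:ℕ) - (c:ℕ)) else 0)
        0
        (Matrix.of fun (r : Fin (n-k)) (c : Fin k) => a (k + (r:ℕ) - (c:ℕ) + 1))
        (hmat a (n - k)) := by
    ext x y
    cases x with
    | inl r =>
      cases y with
      | inl c =>
        have hr : (r:ℕ) < k := r.isLt
        have hc : (c:ℕ) < k := c.isLt
        have he1 : (e (Sum.inl r) : ℕ) = (r:ℕ) := by simp [e]
        have he2 : (e (Sum.inl c) : ℕ) = (c:ℕ) := by simp [e]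
        simp only [Matrix.submatrix_apply, Matrix.fromBlocks_apply₁₁, hmat, Matrix.of_apply]
        rw [hsa]
        simp only [he1, he2, hr, if_pos]
        have : ((e (Sum.inl c)).succ : ℕ) = (c:ℕ) + 1 := by simp [he2]
        rw [this]
        by_cases h1 : (c:ℕ) = (r:ℕ)
        · simp [h1]
        · by_cases h2 : (c:ℕ) < (r:ℕ)
          · have : ¬ ((c:ℕ)+1 = (r:ℕ)+1) := by omega
            have h3 : (c:ℕ)+1 ≤ (r:ℕ) := by omega
            simp [this, h3, h1, h2]
            congr 1; omega
          · have : ¬ ((c:ℕ)+1 = (r:ℕ)+1) := by omega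
            have h3 : ¬ ((c:ℕ)+1 ≤ (r:ℕ)) := by omega
            simp [this, h3, h1, h2]
      | inr c =>
        have hr : (r:ℕ) < k := r.isLt
        have he1 : (e (Sum.inl r) : ℕ) = (r:ℕ) := by simp [e]
        have he2 : (e (Sum.inr c) : ℕ) = k + (c:ℕ) := by simp [e]
        simp only [Matrix.submatrix_apply, Matrix.fromBlocks_apply₁₂, hmat, Matrix.of_apply]
        rw [hsa]
        simp only [he1, hr, if_pos]
        have hc : ((e (Sum.inr c)).succ : ℕ) = k + (c:ℕ) + 1 := by simp [he2]
        rw [hc]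
        have h1 : ¬ (k + (c:ℕ) + 1 = (r:ℕ) + 1) := by omega
        have h2 : ¬ (k + (c:ℕ) + 1 ≤ (r:ℕ)) := by omega
        simp [h1, h2]
        omega
    | inr r =>
      have he1 : (e (Sum.inr r) : ℕ) = k + (r:ℕ) := by simp [e]
      have hnr : ¬ ((e (Sum.inr r) : ℕ) < k) := by omega
      cases y with
      | inl c =>
        have hc : (c:ℕ) < k := c.isLt
        have he2 : (e (Sum.inl c) : ℕ) = (c:ℕ) := by simp [e]
        simp only [Matrix.submatrix_apply, Matrix.fromBlocks_apply₂₁, hmat, Matrix.of_apply]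
        rw [hsa]
        simp only [he1]
        rw [if_neg (by omega : ¬ (k + (r:ℕ) < k))]
        have hcs : ((e (Sum.inl c)).succ : ℕ) = (c:ℕ) + 1 := by simp [he2]
        rw [hcs]
        have h1 : ¬ ((c:ℕ) + 1 = k + (r:ℕ) + 1 + 1) := by omega
        have h2 : (c:ℕ) + 1 ≤ k + (r:ℕ) + 1 := by omega
        rw [if_neg h1, if_pos h2]
        congr 1; omega
      | inr c =>
        have he2 : (e (Sum.inr c) : ℕ) = k + (c:ℕ) := by simp [e]
        simp only [Matrix.submatrix_apply, Matrix.fromBlocks_apply₂₂, hmat, Matrix.of_apply]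
        rw [hsa]
        simp only [he1, hnr, if_neg]
        have hcs : ((e (Sum.inr c)).succ : ℕ) = k + (c:ℕ) + 1 := by simp [he2]
        rw [hcs]
        by_cases h1 : (c:ℕ) = (r:ℕ) + 1
        · have h2 : k + (c:ℕ) + 1 = k + (r:ℕ) + 1 + 1 := by omega
          simp [h2, h1]
          omega
        · have h1' : ¬ (k + (c:ℕ) + 1 = k + (r:ℕ) + 1 + 1) := by omega
          by_cases h2 : (c:ℕ) ≤ (r:ℕ)
          · have h2' : k + (c:ℕ) + 1 ≤ k + (r:ℕ) + 1 := by omega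
            simp [h1', h2', h1, h2]
            rw [if_neg (by omega)]
            congr 1; omega
          · have h2' : ¬ (k + (c:ℕ) + 1 ≤ k + (r:ℕ) + 1) := by omega
            simp [h1', h2', h1, h2]
            omega
  rw [heq, Matrix.det_fromBlocks_zero₁₂]
  have : (Matrix.of fun r c : Fin k => if (c:ℕ) = (r:ℕ) then (1:ℚ)
      else if (c:ℕ) < (r:ℕ) then a ((r:ℕ) - (c:ℕ)) else 0).det = 1 := by
    rw [Matrix.det_of_lowerTriangular]
    · simp
    · intro x y h
      have hxy : (x:ℕ) < (y:ℕ) := h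
      have h1 : ¬ ((y:ℕ) = (x:ℕ)) := by omega
      have h2 : ¬ ((y:ℕ) < (x:ℕ)) := by omega
      rw [Matrix.of_apply, if_neg h1, if_neg h2]
  rw [this, one_mul]

lemma hmat_det_rec (a : ℕ → ℚ) (n : ℕ) :
    (hmat a (n+1)).det =
      ∑ i ∈ Finset.range (n+1), (-1:ℚ)^i * a (i+1) * (hmat a (n-i)).det := by
  rw [Matrix.det_succ_column_zero]
  rw [← Fin.sum_univ_eq_sum_range (fun i => (-1:ℚ)^i * a (i+1) * (hmat a (n-i)).det)]
  refine Finset.sum_congr rfl fun i _ => ?_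
  rw [hmat_minor]
  congr 1

lemma sign_key (n i : ℕ) (h : i ≤ n) : (-1:ℚ)^(n+1) * (-1:ℚ)^i = -(-1:ℚ)^(n-i) := by
  have h2 : n + 1 + i = (n - i) + (2*i + 1) := by omega
  have h3 : (-1:ℚ)^(2*i+1) = -1 := by
    rw [pow_succ, pow_mul]; norm_num
  rw [← pow_add, h2, pow_add, h3]; ring

theorem qEuler_det (q : ℚ) (hq : ∀ k : ℕ, 1 ≤ k → qint q k ≠ 0)
    (N : ℕ) (E : ℕ → ℚ)
    (hE : (PowerSeries.mk fun j => qfact q (2 * N) / qfact q (2 * N + 2 * j)) *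
        (PowerSeries.mk fun n => E n / (2 * n).factorial) = 1) :
    ∀ n : ℕ, 1 ≤ n →
      E n = (-1 : ℚ) ^ n * (2 * n).factorial *
        Matrix.det (Matrix.of fun i j : Fin n =>
          if (j : ℕ) = (i : ℕ) + 1 then 1
          else if (j : ℕ) ≤ (i : ℕ) then
            qfact q (2 * N) / qfact q (2 * N + 2 * (((i : ℕ) - (j : ℕ)) + 1))
          else 0) := by
  set a : ℕ → ℚ := fun j => qfact q (2 * N) / qfact q (2 * N + 2 * j) with ha
  have hqf : ∀ m : ℕ, qfact q m ≠ 0 := by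
    intro m
    unfold qfact
    rw [Finset.prod_ne_zero_iff]
    intro k hk
    exact hq k (Finset.mem_Icc.mp hk).1
  have ha0 : a 0 = 1 := by
    simp only [ha]
    norm_num
    exact hqf _
  have hc : ∀ m : ℕ, ∑ i ∈ Finset.range (m+1),
      a i * (E (m-i) / (2*(m-i)).factorial) = if m = 0 then 1 else 0 := by
    intro m
    have h := congrArg (PowerSeries.coeff m) hE
    rw [PowerSeries.coeff_mul, Finset.Nat.sum_antidiagonal_eq_sum_range_succ_mk] at h
    simpa [PowerSeries.coeff_one, ha] using h
  have key : ∀ m : ℕ, E m / (2*m).factorial = (-1:ℚ)^m * (hmat a m).det := by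
    intro m
    induction m using Nat.strong_induction_on with
    | _ m ih =>
      match m with
      | 0 =>
        have h0 := hc 0
        simp [ha0] at h0
        simp [h0, Matrix.det_fin_zero]
      | Nat.succ m' =>
        have h1 := hc (m'+1)
        rw [Finset.sum_range_succ'] at h1
        simp only [Nat.succ_ne_zero, if_false, Nat.sub_zero, ha0, one_mul] at h1
        have h2 : E (m'+1) / (2*(m'+1)).factorial =
            -∑ i ∈ Finset.range (m'+1), a (i+1) * (E (m'-i) / (2*(m'-i)).factorial) := by
          have : ∀ i ∈ Finset.range (m'+1), a (i+1) * (E (m'+1-(i+1)) / (2*(m'+1-(i+1))).factorial)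
              = a (i+1) * (E (m'-i) / (2*(m'-i)).factorial) := by
            intro i hi
            have him := Finset.mem_range.mp hi
            have e1 : m'+1-(i+1) = m'-i := by omega
            rw [e1]
          rw [Finset.sum_congr rfl this] at h1
          linarith
        rw [h2, hmat_det_rec, Finset.mul_sum]
        rw [neg_eq_iff_eq_neg, ← Finset.sum_neg_distrib]
        refine Finset.sum_congr rfl fun i hi => ?_
        have him := Finset.mem_range.mp hi
        rw [ih (m'-i) (by omega)]
        have hs := sign_key m' i (by omega : i ≤ m')
        calc a (i+1) * ((-1:ℚ)^(m'-i) * (hmat a (m'-i)).det)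
            = -(((-1:ℚ)^(m'+1) * (-1)^i) * (a (i+1) * (hmat a (m'-i)).det)) := by
              rw [hs]; ring
          _ = -((-1:ℚ)^(m'+1) * ((-1)^i * a (i+1) * (hmat a (m'-i)).det)) := by ring
  intro n hn
  have hk := key n
  have hfac : ((2*n).factorial : ℚ) ≠ 0 := Nat.cast_ne_zero.mpr (Nat.factorial_ne_zero _)
  have : E n = (-1:ℚ)^n * (2*n).factorial * (hmat a n).det := by
    field_simp at hk
    rw [hk]; ring
  exact this
end

section
/- For integers n ≥ 1 and r ≥ 1, the hyperharmonic number of order r satisfies H_n^{(r)} = C(n+r-1, r-1) * (H_{n+r-1} - H_{r-1}), where H_m = ∑_{j=1}^m 1/j is the ordinary harmonic number and C denotes the binomial coefficient. -/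
open Finset

/-- Hyperharmonic numbers: `H_n^{(0)} = 1/n` (with `H_0^{(0)} = 0`),
and `H_n^{(r)} = ∑_{k=1}^n H_k^{(r-1)}` for `r ≥ 1`. -/
def hyperH : ℕ → ℕ → ℚ
  | 0, n => if n = 0 then 0 else 1 / n
  | r + 1, n => ∑ k ∈ Finset.Icc 1 n, hyperH r k

/-- Ordinary harmonic numbers `H_m = ∑_{j=1}^m 1/j`. -/
def harm (m : ℕ) : ℚ := ∑ j ∈ Finset.Icc 1 m, (1 : ℚ) / j

lemma harm_succ (m : ℕ) : harm (m + 1) = harm m + 1 / (m + 1) := by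
  unfold harm
  rw [Finset.sum_Icc_succ_top (by omega)]
  push_cast
  ring

lemma hyperH_succ_top (r n : ℕ) :
    hyperH (r + 1) (n + 1) = hyperH (r + 1) n + hyperH r (n + 1) := by
  show (∑ k ∈ Finset.Icc 1 (n+1), hyperH r k) = (∑ k ∈ Finset.Icc 1 n, hyperH r k) + _
  rw [Finset.sum_Icc_succ_top (by omega)]

lemma aux (r n : ℕ) :
    hyperH (r + 1) n = (Nat.choose (n + r) r : ℚ) * (harm (n + r) - harm r) := by
  induction r generalizing n with
  | zero =>
    simp only [Nat.add_zero, Nat.choose_zero_right, Nat.cast_one, one_mul]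
    show (∑ k ∈ Finset.Icc 1 n, hyperH 0 k) = _
    have : harm 0 = 0 := by simp [harm]
    rw [this, sub_zero]
    unfold harm
    apply Finset.sum_congr rfl
    intro k hk
    simp only [Finset.mem_Icc] at hk
    show (if k = 0 then 0 else (1:ℚ)/k) = _
    rw [if_neg (by omega)]
  | succ r ih =>
    induction n with
    | zero => simp [show hyperH (r+2) 0 = 0 from rfl]
    | succ n ihn =>
      rw [hyperH_succ_top, ihn, ih,
        show n + (r + 1) = n + r + 1 from by omega,
        show n + 1 + r = n + r + 1 from by omega,
        show n + 1 + (r + 1) = n + r + 1 + 1 from by omega,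
        harm_succ (n + r + 1),
        show harm r = harm (r + 1) - 1 / ((r : ℚ) + 1) from by
          rw [harm_succ]; push_cast; ring,
        Nat.choose_succ_succ' (n + r + 1) r]
      have key : ((n + r + 1).choose r : ℚ) * ((n : ℚ) + r + 2)
          = (((n + r + 1).choose r : ℚ) + ((n + r + 1).choose (r + 1) : ℚ)) * ((r : ℚ) + 1) := by
        have h := congrArg (Nat.cast (R := ℚ)) (Nat.add_one_mul_choose_eq (n + r + 1) r)
        push_cast [Nat.choose_succ_succ' (n + r + 1) r] at h
        linarith
      have h1 : ((r : ℚ) + 1) ≠ 0 := by positivity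
      have h2 : ((n : ℚ) + ↑r + 1 + 1) ≠ 0 := by positivity
      field_simp
      push_cast
      linear_combination key

theorem hyperharmonic_formula (n r : ℕ) (hn : 1 ≤ n) (hr : 1 ≤ r) :
    hyperH r n = (Nat.choose (n + r - 1) (r - 1) : ℚ) * (harm (n + r - 1) - harm (r - 1)) := by
  obtain ⟨r, rfl⟩ : ∃ r', r = r' + 1 := ⟨r - 1, by omega⟩
  have e1 : n + (r + 1) - 1 = n + r := by omega
  have e2 : r + 1 - 1 = r := by omega
  rw [e1, e2, aux]
end

section
/- Trudi's formula: let b : ℕ → ℚ and let D_n be the determinant of the n×n matrix with entries M[i][j] = b (i-j+1) for i ≥ j, M[i][i+1] = 1, M[i][j] = 0 for j > i+1. Then D_n = ∑ over all (t_1,...,t_n) with t_1 + 2t_2 + ⋯ + n t_n = n of multinomial(t_1+⋯+t_n; t_1,...,t_n) * (-1)^{n - (t_1+⋯+t_n)} * (b 1)^{t_1} (b 2)^{t_2} ⋯ (b n)^{t_n}. -/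
open Finset


def THdet (b : ℕ → ℚ) (n : ℕ) : ℚ :=
  Matrix.det (Matrix.of fun i j : Fin n =>
    if (j : ℕ) = (i : ℕ) + 1 then 1
    else if (j : ℕ) ≤ (i : ℕ) then b ((i : ℕ) - (j : ℕ) + 1)
    else 0)

lemma coe_succAbove {n : ℕ} (i : Fin (n+1)) (x : Fin n) :
    ((i.succAbove x : Fin (n+1)) : ℕ) = if (x:ℕ) < (i:ℕ) then (x:ℕ) else (x:ℕ)+1 := by
  simp only [Fin.succAbove, Fin.lt_def, Fin.coe_castSucc]
  split <;> simp

lemma THdet_zero (b : ℕ → ℚ) : THdet b 0 = 1 := by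
  simp [THdet]

lemma THdet_succ (b : ℕ → ℚ) (n : ℕ) :
    THdet b (n+1) = ∑ i : Fin (n+1), (-1:ℚ)^(i:ℕ) * b ((i:ℕ)+1) * THdet b (n - (i:ℕ)) := by
  rw [THdet, Matrix.det_succ_column_zero]
  refine Finset.sum_congr rfl fun i _ => ?_
  have h0 : (Matrix.of fun r c : Fin (n+1) =>
      if (c : ℕ) = (r : ℕ) + 1 then (1:ℚ)
      else if (c : ℕ) ≤ (r : ℕ) then b ((r : ℕ) - (c : ℕ) + 1)
      else 0) i 0 = b ((i:ℕ)+1) := by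
    simp
  rw [h0]
  congr 1
  -- now the minor
  have hin : (i:ℕ) ≤ n := Nat.lt_succ_iff.mp i.isLt
  have hsum : (i:ℕ) + (n - (i:ℕ)) = n := by omega
  set M : Matrix (Fin (n+1)) (Fin (n+1)) ℚ := Matrix.of fun r c : Fin (n+1) =>
      if (c : ℕ) = (r : ℕ) + 1 then (1:ℚ)
      else if (c : ℕ) ≤ (r : ℕ) then b ((r : ℕ) - (c : ℕ) + 1)
      else 0 with hM
  set e : (Fin (i:ℕ) ⊕ Fin (n - (i:ℕ))) ≃ Fin n := finSumFinEquiv.trans (finCongr hsum) with he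
  set N : Matrix (Fin n) (Fin n) ℚ := M.submatrix i.succAbove Fin.succ with hN
  have key : N.submatrix e e = Matrix.fromBlocks
      (Matrix.of fun r c : Fin (i:ℕ) => if (c:ℕ) = (r:ℕ) then (1:ℚ)
        else if (c:ℕ)+1 ≤ (r:ℕ) then b ((r:ℕ) - (c:ℕ)) else 0)
      0
      (Matrix.of fun (r : Fin (n - (i:ℕ))) (c : Fin (i:ℕ)) => b ((i:ℕ) + (r:ℕ) + 1 - (c:ℕ)))
      (Matrix.of fun r c : Fin (n - (i:ℕ)) =>
        if (c : ℕ) = (r : ℕ) + 1 then (1:ℚ)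
        else if (c : ℕ) ≤ (r : ℕ) then b ((r : ℕ) - (c : ℕ) + 1)
        else 0) := by
    ext x y
    have hel : ∀ r : Fin (i:ℕ), ((e (Sum.inl r) : Fin n) : ℕ) = (r:ℕ) := by
      intro r; simp [he, finSumFinEquiv]
    have her : ∀ r : Fin (n - (i:ℕ)), ((e (Sum.inr r) : Fin n) : ℕ) = (i:ℕ) + (r:ℕ) := by
      intro r; simp [he, finSumFinEquiv]
    cases x with
    | inl r =>
      have hr : ((i.succAbove (e (Sum.inl r)) : Fin (n+1)) : ℕ) = (r:ℕ) := by
        rw [coe_succAbove, hel]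
        simp [r.isLt]
      cases y with
      | inl c =>
        simp only [Matrix.submatrix_apply, hN, Matrix.fromBlocks_apply₁₁, hM, Matrix.of_apply]
        rw [hr]
        have hc : ((e (Sum.inl c)).succ : ℕ) = (c:ℕ)+1 := by simp [hel]
        rw [hc]
        have hri : (r:ℕ) < (i:ℕ) := r.isLt
        have hci : (c:ℕ) < (i:ℕ) := c.isLt
        by_cases h1 : (c:ℕ) = (r:ℕ)
        · simp [h1]
        · rw [if_neg (by omega), if_neg h1]
          by_cases h2 : (c:ℕ)+1 ≤ (r:ℕ)
          · rw [if_pos h2, if_pos h2]; congr 1; omega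
          · rw [if_neg h2, if_neg h2]
      | inr c =>
        simp only [Matrix.submatrix_apply, hN, Matrix.fromBlocks_apply₁₂, hM, Matrix.of_apply,
          Matrix.zero_apply]
        rw [hr]
        have hc : ((e (Sum.inr c)).succ : ℕ) = (i:ℕ)+(c:ℕ)+1 := by simp [her]
        rw [hc]
        have hri : (r:ℕ) < (i:ℕ) := r.isLt
        rw [if_neg (by omega), if_neg (by omega)]
    | inr r =>
      have hr : ((i.succAbove (e (Sum.inr r)) : Fin (n+1)) : ℕ) = (i:ℕ) + (r:ℕ) + 1 := by
        rw [coe_succAbove, her]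
        simp
      cases y with
      | inl c =>
        simp only [Matrix.submatrix_apply, hN, Matrix.fromBlocks_apply₂₁, hM, Matrix.of_apply]
        rw [hr]
        have hc : ((e (Sum.inl c)).succ : ℕ) = (c:ℕ)+1 := by simp [hel]
        rw [hc]
        have hci : (c:ℕ) < (i:ℕ) := c.isLt
        rw [if_neg (by omega), if_pos (by omega)]
        congr 1; omega
      | inr c =>
        simp only [Matrix.submatrix_apply, hN, Matrix.fromBlocks_apply₂₂, hM, Matrix.of_apply]
        rw [hr]
        have hc : ((e (Sum.inr c)).succ : ℕ) = (i:ℕ)+(c:ℕ)+1 := by simp [her]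
        rw [hc]
        by_cases h1 : (c:ℕ) = (r:ℕ)+1
        · rw [if_pos (by omega), if_pos h1]
        · rw [if_neg (by omega), if_neg h1]
          by_cases h2 : (c:ℕ) ≤ (r:ℕ)
          · rw [if_pos (by omega), if_pos h2]; congr 1; omega
          · rw [if_neg (by omega), if_neg h2]
  have hdetN : N.det = THdet b (n - (i:ℕ)) := by
    rw [← Matrix.det_submatrix_equiv_self e N, key, Matrix.det_fromBlocks_zero₁₂]
    have hA : (Matrix.of fun r c : Fin (i:ℕ) => if (c:ℕ) = (r:ℕ) then (1:ℚ)
        else if (c:ℕ)+1 ≤ (r:ℕ) then b ((r:ℕ) - (c:ℕ)) else 0).det = 1 := by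
      rw [Matrix.det_of_lowerTriangular]
      · simp
      · intro r c h
        have : (r:ℕ) < (c:ℕ) := h
        simp only [Matrix.of_apply]
        rw [if_neg (by omega), if_neg (by omega)]
    rw [hA, one_mul]
    rfl
  rw [hdetN]


def SB (b : ℕ → ℚ) (N n : ℕ) : ℚ :=
  ∑ t ∈ (Fintype.piFinset fun _ : Fin N => Finset.range (n + 1)).filter
      (fun t => ∑ j : Fin N, ((j : ℕ) + 1) * t j = n),
    (Nat.multinomial Finset.univ t : ℚ) * (-1 : ℚ) ^ (n - ∑ j : Fin N, t j) *
      ∏ j : Fin N, (b ((j : ℕ) + 1)) ^ (t j)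

lemma mem_SBset {N n : ℕ} (t : Fin N → ℕ) :
    t ∈ (Fintype.piFinset fun _ : Fin N => Finset.range (n + 1)).filter
      (fun t => ∑ j : Fin N, ((j:ℕ)+1) * t j = n) ↔ ∑ j : Fin N, ((j:ℕ)+1) * t j = n := by
  simp only [Finset.mem_filter, Fintype.mem_piFinset, Finset.mem_range]
  constructor
  · tauto
  · intro h
    refine ⟨fun j => ?_, h⟩
    have h1 : ((j:ℕ)+1) * t j ≤ n := by
      rw [← h]
      exact Finset.single_le_sum (f := fun j : Fin N => ((j:ℕ)+1) * t j)
        (fun _ _ => Nat.zero_le _) (Finset.mem_univ j)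
    have h2 : t j ≤ ((j:ℕ)+1) * t j := Nat.le_mul_of_pos_left _ (Nat.succ_pos _)
    omega

lemma SB_zero (b : ℕ → ℚ) : SB b 0 0 = 1 := by
  rw [SB]
  rw [show (Fintype.piFinset fun _ : Fin 0 => Finset.range (0 + 1)).filter
      (fun t => ∑ j : Fin 0, ((j : ℕ) + 1) * t j = 0) = {fun _ => 0} from by
    apply Finset.eq_singleton_iff_unique_mem.mpr
    constructor
    · rw [mem_SBset]; simp
    · intro t _; funext j; exact absurd j.isLt (by omega)]
  simp [Nat.multinomial]

lemma ext_sum {M : Type*} [AddCommMonoid M] {n N : ℕ} (hn : n ≤ N) (f : ℕ → ℕ → M)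
    (hf : ∀ x, f x 0 = 0) (t : Fin n → ℕ) :
    ∑ j : Fin N, f (j:ℕ) (if h : (j:ℕ) < n then t ⟨(j:ℕ), h⟩ else 0)
      = ∑ j : Fin n, f (j:ℕ) (t j) := by
  rw [Fin.sum_univ_eq_sum_range (fun x => f x (if h : x < n then t ⟨x, h⟩ else 0)) N]
  rw [← Finset.sum_subset (Finset.range_subset_range.2 hn)
      (fun x _ hx => by rw [dif_neg (by simpa using hx), hf])]
  rw [← Fin.sum_univ_eq_sum_range (fun x => f x (if h : x < n then t ⟨x, h⟩ else 0)) n]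
  exact Finset.sum_congr rfl fun j _ => by simp

lemma ext_prod {M : Type*} [CommMonoid M] {n N : ℕ} (hn : n ≤ N) (f : ℕ → ℕ → M)
    (hf : ∀ x, f x 0 = 1) (t : Fin n → ℕ) :
    ∏ j : Fin N, f (j:ℕ) (if h : (j:ℕ) < n then t ⟨(j:ℕ), h⟩ else 0)
      = ∏ j : Fin n, f (j:ℕ) (t j) := by
  rw [Fin.prod_univ_eq_prod_range (fun x => f x (if h : x < n then t ⟨x, h⟩ else 0)) N]
  rw [← Finset.prod_subset (Finset.range_subset_range.2 hn)
      (fun x _ hx => by rw [dif_neg (by simpa using hx), hf])]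
  rw [← Fin.prod_univ_eq_prod_range (fun x => f x (if h : x < n then t ⟨x, h⟩ else 0)) n]
  exact Finset.prod_congr rfl fun j _ => by simp

lemma SB_ext (b : ℕ → ℚ) {n N : ℕ} (hn : n ≤ N) : SB b n n = SB b N n := by
  rw [SB, SB]
  refine Finset.sum_nbij' (fun t => fun j : Fin N => if h : (j:ℕ) < n then t ⟨(j:ℕ), h⟩ else 0)
    (fun s => fun j : Fin n => s ⟨(j:ℕ), lt_of_lt_of_le j.isLt hn⟩) ?_ ?_ ?_ ?_ ?_
  · intro t ht
    rw [mem_SBset] at ht ⊢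
    rw [ext_sum hn (fun x v => (x+1) * v) (fun x => Nat.mul_zero _) t]
    exact ht
  · intro s hs
    rw [mem_SBset] at hs ⊢
    have hzero : ∀ j : Fin N, n ≤ (j:ℕ) → s j = 0 := by
      intro j hj
      by_contra hne
      have h1 : ((j:ℕ)+1) * s j ≤ n := by
        rw [← hs]
        exact Finset.single_le_sum (f := fun j : Fin N => ((j:ℕ)+1) * s j)
          (fun _ _ => Nat.zero_le _) (Finset.mem_univ j)
      have h2 : s j ≥ 1 := Nat.one_le_iff_ne_zero.mpr hne
      nlinarith [Nat.le_mul_of_pos_right ((j:ℕ)+1) h2]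
    rw [← ext_sum hn (fun x v => (x+1) * v) (fun x => Nat.mul_zero _)
      (fun j : Fin n => s ⟨(j:ℕ), lt_of_lt_of_le j.isLt hn⟩)]
    refine Eq.trans (Finset.sum_congr rfl fun j _ => ?_) hs
    beta_reduce
    by_cases h : (j:ℕ) < n
    · rw [dif_pos h]
    · rw [dif_neg h, hzero j (le_of_not_gt h), Nat.mul_zero]
  · intro t _
    funext j
    simp
  · intro s hs
    rw [mem_SBset] at hs
    have hzero : ∀ j : Fin N, n ≤ (j:ℕ) → s j = 0 := by
      intro j hj
      by_contra hne
      have h1 : ((j:ℕ)+1) * s j ≤ n := by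
        rw [← hs]
        exact Finset.single_le_sum (f := fun j : Fin N => ((j:ℕ)+1) * s j)
          (fun _ _ => Nat.zero_le _) (Finset.mem_univ j)
      have h2 : s j ≥ 1 := Nat.one_le_iff_ne_zero.mpr hne
      nlinarith [Nat.le_mul_of_pos_right ((j:ℕ)+1) h2]
    funext j
    beta_reduce
    by_cases h : (j:ℕ) < n
    · rw [dif_pos h]
    · rw [dif_neg h, hzero j (le_of_not_gt h)]
  · intro t _
    have hmul : Nat.multinomial Finset.univ
        (fun j : Fin N => if h : (j:ℕ) < n then t ⟨(j:ℕ), h⟩ else 0)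
        = Nat.multinomial Finset.univ t := by
      rw [Nat.multinomial, Nat.multinomial]
      rw [ext_sum hn (fun x v => v) (fun x => rfl) t]
      rw [ext_prod hn (fun x v => Nat.factorial v) (fun x => rfl) t]
    have hsum : ∑ j : Fin N, (if h : (j:ℕ) < n then t ⟨(j:ℕ), h⟩ else 0)
        = ∑ j : Fin n, t j := ext_sum hn (fun x v => v) (fun x => rfl) t
    have hprod : ∏ j : Fin N, b ((j:ℕ)+1) ^ (if h : (j:ℕ) < n then t ⟨(j:ℕ), h⟩ else 0)
        = ∏ j : Fin n, b ((j:ℕ)+1) ^ (t j) :=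
      ext_prod hn (fun x v => b (x+1) ^ v) (fun x => pow_zero _) t
    beta_reduce
    rw [hmul, hsum, hprod]


lemma mult_dec_nat {N : ℕ} (t : Fin N → ℕ) (k : Fin N) (hk : t k ≠ 0) :
    (∑ j, t j) * Nat.multinomial Finset.univ (Function.update t k (t k - 1))
      = t k * Nat.multinomial Finset.univ t := by
  set t' := Function.update t k (t k - 1) with ht'
  have htk' : t' k = t k - 1 := Function.update_self k _ t
  have htj : ∀ j ∈ Finset.univ.erase k, t' j = t j := fun j hj => by
    rw [ht', Function.update_of_ne (Finset.ne_of_mem_erase hj)]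
  have h1 : ∑ j, t' j = t' k + ∑ j ∈ Finset.univ.erase k, t j := by
    rw [← Finset.add_sum_erase _ _ (Finset.mem_univ k)]
    exact congrArg _ (Finset.sum_congr rfl htj)
  have h2 : ∑ j, t j = t k + ∑ j ∈ Finset.univ.erase k, t j :=
    (Finset.add_sum_erase _ _ (Finset.mem_univ k)).symm
  have hsum : ∑ j, t j = (∑ j, t' j) + 1 := by rw [h1, h2, htk']; omega
  have e1 : ∏ j, Nat.factorial (t' j) = Nat.factorial (t k - 1) * ∏ j ∈ Finset.univ.erase k, Nat.factorial (t j) := by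
    rw [← Finset.mul_prod_erase _ _ (Finset.mem_univ k), htk']
    exact congrArg _ (Finset.prod_congr rfl fun j hj => by rw [htj j hj])
  have e2 : ∏ j, Nat.factorial (t j) = Nat.factorial (t k) * ∏ j ∈ Finset.univ.erase k, Nat.factorial (t j) :=
    (Finset.mul_prod_erase _ _ (Finset.mem_univ k)).symm
  have hprod : ∏ j, Nat.factorial (t j) = t k * ∏ j, Nat.factorial (t' j) := by
    rw [e1, e2, ← mul_assoc, Nat.mul_factorial_pred hk]
  have s1 := Nat.multinomial_spec Finset.univ t
  have s2 := Nat.multinomial_spec Finset.univ t'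
  have hP' : 0 < ∏ j, Nat.factorial (t' j) := Finset.prod_pos fun j _ => Nat.factorial_pos _
  apply Nat.eq_of_mul_eq_mul_left hP'
  calc (∏ j, Nat.factorial (t' j)) * ((∑ j, t j) * Nat.multinomial Finset.univ t')
      = (∑ j, t j) * ((∏ j, Nat.factorial (t' j)) * Nat.multinomial Finset.univ t') := by ring
    _ = (∑ j, t j) * Nat.factorial (∑ j, t' j) := by rw [s2]
    _ = Nat.factorial (∑ j, t j) := by rw [hsum, Nat.factorial_succ]
    _ = (∏ j, Nat.factorial (t j)) * Nat.multinomial Finset.univ t := s1.symm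
    _ = (t k * ∏ j, Nat.factorial (t' j)) * Nat.multinomial Finset.univ t := by rw [← hprod]
    _ = (∏ j, Nat.factorial (t' j)) * (t k * Nat.multinomial Finset.univ t) := by ring

lemma mult_dec {N : ℕ} (t : Fin N → ℕ) (h : ∑ j, t j ≠ 0) :
    (Nat.multinomial Finset.univ t : ℚ)
      = ∑ k : Fin N, if t k = 0 then 0
          else (Nat.multinomial Finset.univ (Function.update t k (t k - 1)) : ℚ) := by
  have hT : ((∑ j, t j : ℕ) : ℚ) ≠ 0 := by exact_mod_cast h
  apply mul_left_cancel₀ hT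
  rw [Finset.mul_sum]
  have key : ∀ k : Fin N, ((∑ j, t j : ℕ) : ℚ) *
      (if t k = 0 then 0
        else (Nat.multinomial Finset.univ (Function.update t k (t k - 1)) : ℚ))
      = (t k : ℚ) * (Nat.multinomial Finset.univ t : ℚ) := by
    intro k
    by_cases hk : t k = 0
    · simp [hk]
    · rw [if_neg hk, ← Nat.cast_mul, mult_dec_nat t k hk, Nat.cast_mul]
  rw [Finset.sum_congr rfl fun k _ => key k, ← Finset.sum_mul, ← Nat.cast_sum]

lemma sum_ite_ne {α M : Type*} [AddCommMonoid M] (s : Finset α) (p : α → Prop)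
    [DecidablePred p] (f : α → M) :
    ∑ t ∈ s, (if p t then 0 else f t) = ∑ t ∈ s.filter (fun t => ¬ p t), f t := by
  rw [Finset.sum_filter]
  exact Finset.sum_congr rfl fun t _ => by rw [ite_not]

lemma SB_rec (b : ℕ → ℚ) (m : ℕ) :
    SB b (m+1) (m+1)
      = ∑ k : Fin (m+1), (-1:ℚ)^(k:ℕ) * b ((k:ℕ)+1) * SB b (m+1) (m - (k:ℕ)) := by
  rw [SB]
  have hA : ∀ t ∈ (Fintype.piFinset fun _ : Fin (m+1) => Finset.range (m+1+1)).filter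
      (fun t => ∑ j : Fin (m+1), ((j:ℕ)+1) * t j = m+1), ∑ j : Fin (m+1), t j ≠ 0 := by
    intro t ht h0
    rw [mem_SBset] at ht
    have hz : ∀ j : Fin (m+1), t j = 0 := fun j =>
      (Finset.sum_eq_zero_iff.mp h0) j (Finset.mem_univ j)
    rw [Finset.sum_congr rfl fun j _ => by rw [hz j, Nat.mul_zero]] at ht
    simp at ht
  rw [Finset.sum_congr rfl fun t ht => by rw [mult_dec t (hA t ht)]]
  simp only [Finset.sum_mul, ite_mul, zero_mul]
  rw [Finset.sum_comm]
  refine Finset.sum_congr rfl fun k _ => ?_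
  rw [SB, Finset.mul_sum, sum_ite_ne]
  -- helpers
  have hkm : (k:ℕ) ≤ m := Nat.lt_succ_iff.mp k.isLt
  have wk : ∀ u : Fin (m+1) → ℕ,
      ∑ j : Fin (m+1), ((j:ℕ)+1) * u j = ((k:ℕ)+1) * u k + ∑ j ∈ Finset.univ.erase k, ((j:ℕ)+1) * u j :=
    fun u => (Finset.add_sum_erase _ (fun j : Fin (m+1) => ((j:ℕ)+1) * u j) (Finset.mem_univ k)).symm
  have sk : ∀ u : Fin (m+1) → ℕ,
      ∑ j : Fin (m+1), u j = u k + ∑ j ∈ Finset.univ.erase k, u j :=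
    fun u => (Finset.add_sum_erase _ _ (Finset.mem_univ k)).symm
  have eraseW : ∀ (u : Fin (m+1) → ℕ) (v : ℕ),
      ∑ j ∈ Finset.univ.erase k, ((j:ℕ)+1) * (Function.update u k v j)
        = ∑ j ∈ Finset.univ.erase k, ((j:ℕ)+1) * u j :=
    fun u v => Finset.sum_congr rfl fun j hj => by
      rw [Function.update_of_ne (Finset.ne_of_mem_erase hj)]
  have eraseS : ∀ (u : Fin (m+1) → ℕ) (v : ℕ),
      ∑ j ∈ Finset.univ.erase k, (Function.update u k v j)
        = ∑ j ∈ Finset.univ.erase k, u j :=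
    fun u v => Finset.sum_congr rfl fun j hj => by
      rw [Function.update_of_ne (Finset.ne_of_mem_erase hj)]
  have wupd : ∀ (u : Fin (m+1) → ℕ) (v : ℕ),
      ∑ j : Fin (m+1), ((j:ℕ)+1) * (Function.update u k v j)
        = ((k:ℕ)+1) * v + ∑ j ∈ Finset.univ.erase k, ((j:ℕ)+1) * u j := by
    intro u v
    rw [wk (Function.update u k v), Function.update_self, eraseW]
  have supd : ∀ (u : Fin (m+1) → ℕ) (v : ℕ),
      ∑ j : Fin (m+1), (Function.update u k v j) = v + ∑ j ∈ Finset.univ.erase k, u j := by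
    intro u v
    rw [sk (Function.update u k v), Function.update_self, eraseS]
  have sumle : ∀ u : Fin (m+1) → ℕ, ∑ j : Fin (m+1), u j ≤ ∑ j : Fin (m+1), ((j:ℕ)+1) * u j :=
    fun u => Finset.sum_le_sum fun j _ => Nat.le_mul_of_pos_left _ (Nat.succ_pos _)
  have hmulfact : ∀ v : ℕ, v ≠ 0 → ((k:ℕ)+1) * v = ((k:ℕ)+1) * (v - 1) + ((k:ℕ)+1) := by
    intro v hv
    conv_lhs => rw [show v = (v - 1) + 1 from by omega]
    rw [Nat.mul_succ]
  refine Finset.sum_nbij' (fun t => Function.update t k (t k - 1))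
    (fun s => Function.update s k (s k + 1)) ?_ ?_ ?_ ?_ ?_
  · -- forward membership
    intro t ht
    rw [Finset.mem_filter, mem_SBset] at ht
    obtain ⟨hc, hk0⟩ := ht
    rw [mem_SBset, wupd t (t k - 1)]
    have h2 := wk t
    have h3 := hmulfact (t k) hk0
    omega
  · -- backward membership
    intro s hs
    rw [mem_SBset] at hs
    rw [Finset.mem_filter, mem_SBset]
    constructor
    · rw [wupd s (s k + 1)]
      have h2 := wk s
      have h3 : ((k:ℕ)+1) * (s k + 1) = ((k:ℕ)+1) * s k + ((k:ℕ)+1) := Nat.mul_succ _ _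
      omega
    · simp [Function.update_self]
  · -- left inverse
    intro t ht
    rw [Finset.mem_filter] at ht
    funext j
    by_cases hj : j = k
    · subst hj
      simp only [Function.update_self]
      have := ht.2
      omega
    · simp [Function.update_of_ne hj]
  · -- right inverse
    intro s _
    funext j
    by_cases hj : j = k
    · subst hj
      simp [Function.update_self]
    · simp [Function.update_of_ne hj]
  · -- summand equality
    intro t ht
    rw [Finset.mem_filter, mem_SBset] at ht
    obtain ⟨hc, hk0⟩ := ht
    have hcS : ∑ j : Fin (m+1), ((j:ℕ)+1) * (Function.update t k (t k - 1) j) = m - (k:ℕ) := by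
      rw [wupd t (t k - 1)]
      have h2 := wk t
      have h3 := hmulfact (t k) hk0
      omega
    have hS : (∑ j : Fin (m+1), Function.update t k (t k - 1) j) + 1 = ∑ j : Fin (m+1), t j := by
      rw [supd t (t k - 1), sk t]
      omega
    have hT : ∑ j : Fin (m+1), t j ≤ m + 1 := le_trans (sumle t) (le_of_eq hc)
    have hSle : ∑ j : Fin (m+1), Function.update t k (t k - 1) j ≤ m - (k:ℕ) :=
      le_trans (sumle _) (le_of_eq hcS)
    have hexp : (m + 1) - ∑ j : Fin (m+1), t j = (k:ℕ) + ((m - (k:ℕ)) - ∑ j : Fin (m+1), Function.update t k (t k - 1) j) := by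
      omega
    have hprod : ∏ j : Fin (m+1), b ((j:ℕ)+1) ^ (t j)
        = b ((k:ℕ)+1) * ∏ j : Fin (m+1), b ((j:ℕ)+1) ^ (Function.update t k (t k - 1) j) := by
      rw [← Finset.mul_prod_erase _ (fun j : Fin (m+1) => b ((j:ℕ)+1) ^ (t j)) (Finset.mem_univ k),
        ← Finset.mul_prod_erase _ (fun j : Fin (m+1) => b ((j:ℕ)+1) ^ (Function.update t k (t k - 1) j))
          (Finset.mem_univ k)]
      have he : ∏ j ∈ Finset.univ.erase k, b ((j:ℕ)+1) ^ (Function.update t k (t k - 1) j)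
          = ∏ j ∈ Finset.univ.erase k, b ((j:ℕ)+1) ^ (t j) :=
        Finset.prod_congr rfl fun j hj => by
          rw [Function.update_of_ne (Finset.ne_of_mem_erase hj)]
      rw [he, Function.update_self]
      conv_lhs => rw [show t k = (t k - 1) + 1 from by omega, pow_succ]
      ring
    rw [hexp, pow_add, hprod]
    ring


lemma THdet_eq_SB (b : ℕ → ℚ) : ∀ n, THdet b n = SB b n n := by
  intro n
  induction n using Nat.strong_induction_on with
  | _ n ih =>
    cases n with
    | zero => rw [THdet_zero, SB_zero]
    | succ m =>
      rw [THdet_succ, SB_rec]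
      refine Finset.sum_congr rfl fun i _ => ?_
      have h1 : m - (i:ℕ) < m + 1 := by omega
      rw [ih _ h1, SB_ext b (show m - (i:ℕ) ≤ m + 1 by omega)]

theorem trudi_formula (b : ℕ → ℚ) (n : ℕ) :
    THdet b n
      = ∑ t ∈ (Fintype.piFinset fun _ : Fin n => Finset.range (n + 1)).filter
          (fun t => ∑ j : Fin n, ((j : ℕ) + 1) * t j = n),
        (Nat.multinomial Finset.univ t : ℚ) * (-1 : ℚ) ^ (n - ∑ j : Fin n, t j) *
          ∏ j : Fin n, (b ((j : ℕ) + 1)) ^ (t j) := by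
  rw [THdet_eq_SB b n, SB]
end
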